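/- With h and g0 as above, for fixed t0 > 0 and t6 ≠ 0 the integral ∫_0^{∞} g0(t0,t5,t6) dt5 is at most C · min{ t0^{-1/2}|t6|^{-5/4}, t0^{-8} } for some absolute constant C. -/

import Mathlib

open MeasureTheory

noncomputable def h (t0 t1 t5 t6 : ℝ) : ℝ :=
  max (|t0 ^ 4 * t5|) (max (|t0 ^ 4 * t1|)
    (max (|t1 * t5 ^ 2 * t6 ^ 2 + t0 ^ 2 * t1 ^ 2 * t6|)
      (max (|t0 ^ 2 * t1 * t5 * t6|)
        (max (|t0 ^ 2 * t5 ^ 2 * t6 + t0 ^ 4 * t1|)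
          (|t5 ^ 3 * t6 ^ 2 + t0 ^ 2 * t1 * t5 * t6|)))))

noncomputable def g0 (t0 t5 t6 : ℝ) : ℝ :=
  (volume {t1 : ℝ | h t0 t1 t5 t6 ≤ 1}).toReal

/-!
Up to the factor `t0² t6`, the third entry of `h` is the quadratic `t1 (t1 + c)` with
`c = t5² t6 / t0²`, so the `t1`-sublevel set lies where `|t1| |t1 + c| ≤ M := 1 / (t0² |t6|)`.
There one of the two factors is at most `√M`, and also at most `2M / |c|` since the other is at
least `|c| / 2`; hence `g0 ≲ t0⁻¹ |t6|^(-1/2)` and `g0 ≲ t5⁻² t6⁻²`, and integrating the minimum of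
these in `t5` gives `t0^(-1/2) |t6|^(-5/4)`. The second entry of `h` gives `g0 ≤ 2 t0⁻⁴`, and the
first makes `g0` vanish once `t5 > t0⁻⁴`, whence `t0⁻⁸`.
-/

open Set

lemma volume_abs_le_or_abs_add_le (c : ℝ) {δ : ℝ} (hδ : 0 ≤ δ) :
    volume {x : ℝ | |x| ≤ δ ∨ |x + c| ≤ δ} ≤ ENNReal.ofReal (4 * δ) := by
  have hballs : {x : ℝ | |x| ≤ δ ∨ |x + c| ≤ δ} =
      Metric.closedBall 0 δ ∪ Metric.closedBall (-c) δ := by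
    ext x
    simp [Real.dist_eq]
  calc volume {x : ℝ | |x| ≤ δ ∨ |x + c| ≤ δ}
      ≤ volume (Metric.closedBall (0 : ℝ) δ) + volume (Metric.closedBall (-c) δ) :=
        hballs ▸ measure_union_le _ _
    _ = ENNReal.ofReal (2 * δ) + ENNReal.ofReal (2 * δ) := by
        rw [Real.volume_closedBall, Real.volume_closedBall]
    _ = ENNReal.ofReal (4 * δ) := by
        rw [← ENNReal.ofReal_add (by positivity) (by positivity)]
        ring_nf

lemma volume_abs_mul_add_le_le_of {c M δ : ℝ} (hδ0 : 0 ≤ δ)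
    (hδ : ∀ x : ℝ, δ < |x| → δ < |x + c| → M < |x * (x + c)|) :
    volume {x : ℝ | |x * (x + c)| ≤ M} ≤ ENNReal.ofReal (4 * δ) := by
  refine (measure_mono fun x hx => ?_).trans (volume_abs_le_or_abs_add_le c hδ0)
  by_contra hsmall
  simp only [mem_ofPred_eq, not_or, not_le] at hx hsmall
  exact (hδ x hsmall.1 hsmall.2).not_ge hx

lemma volume_abs_mul_add_le_le_sqrt (c M : ℝ) :
    volume {x : ℝ | |x * (x + c)| ≤ M} ≤ ENNReal.ofReal (4 * √M) := by
  refine volume_abs_mul_add_le_le_of (Real.sqrt_nonneg M) fun x hx hxc => ?_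
  rcases le_or_gt 0 M with hM | hM
  · calc M = √M * √M := (Real.mul_self_sqrt hM).symm
      _ < |x| * |x + c| := mul_lt_mul'' hx hxc (Real.sqrt_nonneg M) (Real.sqrt_nonneg M)
      _ = |x * (x + c)| := (abs_mul _ _).symm
  · exact hM.trans_le (abs_nonneg _)

lemma volume_abs_mul_add_le_le_div {c M : ℝ} (hc : c ≠ 0) (hM : 0 ≤ M) :
    volume {x : ℝ | |x * (x + c)| ≤ M} ≤ ENNReal.ofReal (4 * (2 * M / |c|)) := by
  have hc' : 0 < |c| := abs_pos.2 hc
  have hδ : 0 ≤ 2 * M / |c| := by positivity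
  refine volume_abs_mul_add_le_le_of hδ fun x hx hxc => ?_
  have htri : |c| ≤ |x| + |x + c| := by
    simpa using abs_add_le (-x) (x + c)
  have hM : M = |c| / 2 * (2 * M / |c|) := by field_simp
  rw [abs_mul, hM]
  rcases le_total (|c| / 2) |x| with hbig | hsmall
  · exact mul_lt_mul' hbig hxc hδ ((half_pos hc').trans_le hbig)
  · have hbig : |c| / 2 ≤ |x + c| := by linarith
    rw [mul_comm |x|]
    exact mul_lt_mul' hbig hx hδ ((half_pos hc').trans_le hbig)

lemma abs_le_h (t0 t1 t5 t6 : ℝ) :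
    |t0 ^ 4 * t5| ≤ h t0 t1 t5 t6 ∧ |t0 ^ 4 * t1| ≤ h t0 t1 t5 t6 ∧
      |t1 * t5 ^ 2 * t6 ^ 2 + t0 ^ 2 * t1 ^ 2 * t6| ≤ h t0 t1 t5 t6 :=
  ⟨le_max_left _ _, (le_max_left _ _).trans (le_max_right _ _),
    (le_max_left _ _).trans ((le_max_right _ _).trans (le_max_right _ _))⟩

section SublevelSet

variable {t0 t5 t6 : ℝ}

lemma g0_le_of_subset {S : Set ℝ} {r : ℝ} (hS : {t1 | h t0 t1 t5 t6 ≤ 1} ⊆ S) (hr : 0 ≤ r)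
    (hvol : volume S ≤ ENNReal.ofReal r) : g0 t0 t5 t6 ≤ r :=
  ENNReal.toReal_le_of_le_ofReal hr ((measure_mono hS).trans hvol)

lemma setOf_h_le_one_subset (ht0 : t0 ≠ 0) (ht6 : t6 ≠ 0) :
    {t1 | h t0 t1 t5 t6 ≤ 1} ⊆
      {x | |x * (x + t5 ^ 2 * t6 / t0 ^ 2)| ≤ 1 / (t0 ^ 2 * |t6|)} := by
  intro x hx
  have hquad := (abs_le_h t0 x t5 t6).2.2.trans hx
  have hfactor : x * t5 ^ 2 * t6 ^ 2 + t0 ^ 2 * x ^ 2 * t6 =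
      x * (x + t5 ^ 2 * t6 / t0 ^ 2) * (t0 ^ 2 * t6) := by
    field_simp
    ring
  rw [hfactor, abs_mul _ (t0 ^ 2 * t6), abs_mul (t0 ^ 2), abs_of_pos (by positivity : 0 < t0 ^ 2)]
    at hquad
  rw [mem_ofPred_eq, le_div_iff₀ (by positivity)]
  exact hquad

lemma g0_le_div_sqrt (ht0 : t0 ≠ 0) (ht6 : t6 ≠ 0) :
    g0 t0 t5 t6 ≤ 4 / (|t0| * √|t6|) := by
  refine g0_le_of_subset (setOf_h_le_one_subset ht0 ht6) (by positivity) ?_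
  convert volume_abs_mul_add_le_le_sqrt _ _ using 2
  rw [one_div, Real.sqrt_inv, Real.sqrt_mul (sq_nonneg _), Real.sqrt_sq_eq_abs, div_eq_mul_inv]

lemma g0_le_div_sq (ht0 : t0 ≠ 0) (ht5 : t5 ≠ 0) (ht6 : t6 ≠ 0) :
    g0 t0 t5 t6 ≤ 8 / t6 ^ 2 / t5 ^ 2 := by
  refine g0_le_of_subset (setOf_h_le_one_subset ht0 ht6) (by positivity) ?_
  convert volume_abs_mul_add_le_le_div (c := t5 ^ 2 * t6 / t0 ^ 2) (M := 1 / (t0 ^ 2 * |t6|))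
    (by positivity) (by positivity) using 2
  rw [abs_div, abs_mul, abs_of_nonneg (sq_nonneg t5), abs_of_nonneg (sq_nonneg t0), ← sq_abs t6]
  field_simp
  ring

lemma g0_le_two_div (ht0 : t0 ≠ 0) : g0 t0 t5 t6 ≤ 2 / t0 ^ 4 := by
  refine g0_le_of_subset (S := Metric.closedBall 0 (1 / t0 ^ 4)) (fun x hx => ?_)
    (by positivity) ?_
  · have hlin := (abs_le_h t0 x t5 t6).2.1.trans hx
    rw [abs_mul, abs_of_pos (by positivity : 0 < t0 ^ 4)] at hlin
    rw [Metric.mem_closedBall, Real.dist_0_eq_abs, le_div_iff₀ (by positivity)]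
    linarith
  · rw [Real.volume_closedBall, mul_one_div]

lemma g0_eq_zero (ht0 : t0 ≠ 0) (ht5 : 1 / t0 ^ 4 < t5) : g0 t0 t5 t6 = 0 := by
  have hempty : {t1 | h t0 t1 t5 t6 ≤ 1} = ∅ := by
    refine eq_empty_of_forall_notMem fun x hx => ?_
    have hbig : 1 < |t0 ^ 4 * t5| := by
      rw [div_lt_iff₀ (by positivity)] at ht5
      exact (by linarith : 1 < t0 ^ 4 * t5).trans_le (le_abs_self _)
    exact (hbig.trans_le (abs_le_h t0 x t5 t6).1).not_ge hx
  simp [g0, hempty]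

end SublevelSet

section IntegralBounds

variable {f : ℝ → ℝ}

lemma setIntegral_Ioi_le_of_eq_zero_of_gt {A T : ℝ} (hT : 0 ≤ T) (hf : ∀ x > 0, 0 ≤ f x)
    (hA : ∀ x ∈ Ioc 0 T, f x ≤ A) (hzero : ∀ x > T, f x = 0) :
    ∫ x in Ioi 0, f x ≤ T * A := by
  rw [setIntegral_eq_of_subset_of_forall_sdiff_eq_zero measurableSet_Ioi Ioc_subset_Ioi_self
    fun x hx => hzero x (not_le.1 fun hxT => hx.2 ⟨hx.1, hxT⟩)]
  calc ∫ x in Ioc 0 T, f x ≤ ‖∫ x in Ioc 0 T, f x‖ := Real.le_norm_self _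
    _ ≤ A * volume.real (Ioc 0 T) := norm_setIntegral_le_of_norm_le_const measure_Ioc_lt_top
        fun x hx => (Real.norm_of_nonneg (hf x hx.1)).trans_le (hA x hx)
    _ = T * A := by rw [Real.volume_real_Ioc_of_le hT, sub_zero, mul_comm]

lemma setIntegral_Ioi_le_of_le_of_le_div_sq {A B s : ℝ} (hs : 0 < s) (hf : ∀ x > 0, 0 ≤ f x)
    (hA : ∀ x > 0, f x ≤ A) (hB : ∀ x > 0, f x ≤ B / x ^ 2) :
    ∫ x in Ioi 0, f x ≤ s * A + B / s := by
  set near : ℝ → ℝ := (Ioc 0 s).indicator fun _ => A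
  set far : ℝ → ℝ := (Ioi s).indicator fun x => B * x ^ (-2 : ℝ)
  have hnear : IntegrableOn near (Ioi 0) :=
    ((integrableOn_const measure_Ioc_lt_top.ne).integrable_indicator measurableSet_Ioc).integrableOn
  have hdecay : IntegrableOn (fun x : ℝ => B * x ^ (-2 : ℝ)) (Ioi s) :=
    (integrableOn_Ioi_rpow_of_lt (by norm_num) hs).const_mul B
  have hfar : IntegrableOn far (Ioi 0) :=
    (hdecay.integrable_indicator measurableSet_Ioi).integrableOn
  have hdom : ∀ x > 0, f x ≤ near x + far x := by
    intro x hx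
    rcases le_or_gt x s with hxs | hxs
    · simp [near, far, hx, hxs, not_lt.2 hxs, hA x hx]
    · simpa [near, far, hxs, not_le.2 hxs, Real.rpow_neg hx.le, div_eq_mul_inv] using hB x hx
  calc ∫ x in Ioi 0, f x ≤ ∫ x in Ioi 0, near x + far x :=
        integral_mono_of_nonneg ((ae_restrict_iff' measurableSet_Ioi).2 (ae_of_all _ hf))
          (hnear.add hfar) ((ae_restrict_iff' measurableSet_Ioi).2 (ae_of_all _ hdom))
    _ = s * A + B / s := by
        rw [integral_add hnear hfar, setIntegral_indicator measurableSet_Ioc,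
          setIntegral_indicator measurableSet_Ioi, inter_eq_self_of_subset_right Ioc_subset_Ioi_self,
          inter_eq_self_of_subset_right (Ioi_subset_Ioi hs.le), setIntegral_const,
          Real.volume_real_Ioc_of_le hs.le, integral_const_mul,
          integral_Ioi_rpow_of_lt (by norm_num) hs]
        norm_num [Real.rpow_neg_one]
        ring

end IntegralBounds

theorem g0_integral_t5_bound :
    ∃ C : ℝ, 0 < C ∧ ∀ t0 t6 : ℝ, 0 < t0 → t6 ≠ 0 →
      ∫ t5 in Set.Ioi (0 : ℝ), g0 t0 t5 t6 ≤
        C * min (t0 ^ (-(1 / 2 : ℝ)) * |t6| ^ (-(5 / 4 : ℝ))) (t0 ^ (-(8 : ℝ))) := by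
  refine ⟨12, by norm_num, fun t0 t6 ht0 ht6 => ?_⟩
  have hg0 : ∀ t5 > 0, 0 ≤ g0 t0 t5 t6 := fun _ _ => ENNReal.toReal_nonneg
  rw [mul_min_of_nonneg _ _ (by norm_num : (0 : ℝ) ≤ 12)]
  refine le_min ?_ ?_
  · obtain ⟨a, ha, rfl⟩ : ∃ a, 0 < a ∧ t0 = a ^ 2 :=
      ⟨√t0, Real.sqrt_pos.2 ht0, (Real.sq_sqrt ht0.le).symm⟩
    obtain ⟨b, hb, hb4⟩ : ∃ b, 0 < b ∧ |t6| = b ^ 4 :=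
      ⟨√√|t6|, by positivity, by
        rw [show (4 : ℕ) = 2 * 2 from rfl, pow_mul, Real.sq_sqrt (by positivity),
          Real.sq_sqrt (abs_nonneg t6)]⟩
    have hrpow : (a ^ 2) ^ (-(1 / 2 : ℝ)) * |t6| ^ (-(5 / 4 : ℝ)) = 1 / (a * b ^ 5) := by
      rw [hb4, ← Real.rpow_natCast_mul ha.le, ← Real.rpow_natCast_mul hb.le]
      norm_num [Real.rpow_neg, ha.le, hb.le, mul_comm]
    -- `a / b ^ 3` is the split point balancing the two terms of `s * A + B / s`
    calc ∫ t5 in Ioi 0, g0 (a ^ 2) t5 t6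
        ≤ a / b ^ 3 * (4 / (|a ^ 2| * √|t6|)) + 8 / t6 ^ 2 / (a / b ^ 3) :=
          setIntegral_Ioi_le_of_le_of_le_div_sq (by positivity) hg0
            (fun _ _ => g0_le_div_sqrt (by positivity) ht6)
            (fun _ ht5 => g0_le_div_sq (by positivity) ht5.ne' ht6)
      _ = 12 * (1 / (a * b ^ 5)) := by
          rw [abs_sq, ← sq_abs t6, hb4, show b ^ 4 = (b ^ 2) ^ 2 by ring, Real.sqrt_sq (by positivity)]
          field_simp
          ring
      _ = _ := by rw [hrpow]
  · calc ∫ t5 in Ioi 0, g0 t0 t5 t6 ≤ 1 / t0 ^ 4 * (2 / t0 ^ 4) :=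
          setIntegral_Ioi_le_of_eq_zero_of_gt (by positivity) hg0
            (fun _ _ => g0_le_two_div ht0.ne') (fun _ ht5 => g0_eq_zero ht0.ne' ht5)
      _ ≤ 12 * t0 ^ (-(8 : ℝ)) := by
          rw [Real.rpow_neg ht0.le, show (8 : ℝ) = (8 : ℕ) by norm_num, Real.rpow_natCast]
          field_simp
          nlinarith [pow_pos ht0 8]
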